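/- Let p : N → M be a smooth submersion-like map, A a diffusion operator on M with symbol σ^A, and B a lift of A with symbol σ^B. Define, for u ∈ p⁻¹(x) and v ∈ Image(σₓ^A), h_u(v) := σ_u^B((T_u p)*(α)) where α ∈ T*ₓM is any covector with σₓ^A(α) = v. Then h_u(v) is independent of the choice of α, and T_u p(h_u(v)) = v. -/
import Mathlib


/-- The horizontal lift `h_u(v) = σ^B((T_u p)* α)`, for `α` any covector with
`σ^A α = v`, is independent of the choice of `α`, and projects back to `v`. -/
theorem horizontal_lift_independent_of_choice
    (V W : Type*) [AddCommGroup V] [Module ℝ V] [FiniteDimensional ℝ V]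
    [AddCommGroup W] [Module ℝ W] [FiniteDimensional ℝ W]
    (Tp : V →ₗ[ℝ] W)
    (σA : Module.Dual ℝ W →ₗ[ℝ] W) (σB : Module.Dual ℝ V →ₗ[ℝ] V)
    (hBsymm : ∀ β γ : Module.Dual ℝ V, β (σB γ) = γ (σB β))
    (hBpsd : ∀ β : Module.Dual ℝ V, 0 ≤ β (σB β))
    (hintertwine : ∀ α : Module.Dual ℝ W, Tp (σB (Tp.dualMap α)) = σA α)
    (v : W) (α α' : Module.Dual ℝ W) (hα : σA α = v) (hα' : σA α' = v) :
    σB (Tp.dualMap α) = σB (Tp.dualMap α') ∧ Tp (σB (Tp.dualMap α)) = v := by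
  refine ⟨?_, by rw [hintertwine, hα]⟩
  set β : Module.Dual ℝ V := Tp.dualMap (α - α') with hβ
  -- Tp (σB β) = 0
  have h0 : Tp (σB β) = 0 := by
    rw [hβ, hintertwine, map_sub, hα, hα', sub_self]
  -- β (σB β) = 0
  have hββ : β (σB β) = 0 := by
    have : β (σB β) = (α - α') (Tp (σB β)) := by
      rw [hβ]; rfl
    rw [this, h0, map_zero]
  -- Cauchy-Schwarz-like: for all γ, γ (σB β) = 0
  have hkey : ∀ γ : Module.Dual ℝ V, γ (σB β) = 0 := by
    intro γ
    by_contra hd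
    set c := γ (σB γ) with hc
    set d := γ (σB β) with hdd
    set t : ℝ := -(c + 1) / (2 * d) with ht
    have hq : 0 ≤ (γ + t • β) (σB (γ + t • β)) := hBpsd _
    have hexp : (γ + t • β) (σB (γ + t • β)) = c + 2 * t * d := by
      have hsy : β (σB γ) = d := hBsymm β γ
      simp only [map_add, map_smul, LinearMap.add_apply, LinearMap.smul_apply,
        smul_eq_mul, hsy, hββ, ← hc, ← hdd]
      ring
    rw [hexp, ht] at hq
    have hval : c + 2 * (-(c + 1) / (2 * d)) * d = -1 := by
      field_simp
      ring
    linarith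
  have hz : σB β = 0 := (Module.forall_dual_apply_eq_zero_iff ℝ (σB β)).mp hkey
  have : σB (Tp.dualMap α) - σB (Tp.dualMap α') = 0 := by
    rw [← map_sub, ← map_sub]; exact hz
  exact sub_eq_zero.mp this
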